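/- arXiv:2312.04990 — 5 statements merged into one kernel-verified Lean document; each statement's English description precedes it below -/
import Mathlib

section
/- Define the value iteration map for the minimax problem: given a function J : ℝ₊ⁿ → ℝ, let (TJ)(x) = min_{|u|≤Ex} max_{|w|≤Gx} [ sᵀx + rᵀu − γᵀw + J(Ax + Bu + Fw) ]. If p ∈ ℝⁿ and J(x) = pᵀx for all x ≥ 0, and the invariance condition A ≥ |B|E + |F|G holds with E, G entrywise nonnegative, then (TJ)(x) = qᵀx where q = s + Aᵀp − Eᵀ|r + Bᵀp| + Gᵀ|−γ + Fᵀp|. In particular, linearity of the value function is preserved under value iteration. -/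
/-!
On the box `|w| ≤ y` (with `y ≥ 0`) the linear form `c ⬝ᵥ w` ranges exactly over
`[-(|c| ⬝ᵥ y), |c| ⬝ᵥ y]`, the extremes being attained at `w = ± sign c * y`.
The invariance condition `A ≥ |B| E + |F| G` keeps the successor state `A x + B u + F w`
nonnegative for every admissible `u, w`, so there `J` agrees with `p ⬝ᵥ ·` and the objective is
affine in `(u, w)`: `s ⬝ᵥ x + p ⬝ᵥ A x + (r + Bᵀ p) ⬝ᵥ u + (-γ + Fᵀ p) ⬝ᵥ w`.
Maximizing over the `w`-box and then minimizing over the `u`-box gives `q ⬝ᵥ x`.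
-/

open Matrix

section Box

variable {ι κ : Type*} [Fintype ι] [Fintype κ]

lemma dotProduct_le_abs_dotProduct_of_abs_le {c y w : ι → ℝ} (hw : ∀ i, |w i| ≤ y i) :
    c ⬝ᵥ w ≤ |c| ⬝ᵥ y :=
  Finset.sum_le_sum fun i _ =>
    calc c i * w i ≤ |c i * w i| := le_abs_self _
      _ = |c i| * |w i| := abs_mul _ _
      _ ≤ |c i| * y i := by gcongr; exact hw i

lemma isGreatest_image_dotProduct_box (c : ι → ℝ) {y : ι → ℝ} (hy : 0 ≤ y) :
    IsGreatest ((c ⬝ᵥ ·) '' {w | ∀ i, |w i| ≤ y i}) (|c| ⬝ᵥ y) := by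
  refine ⟨⟨fun i => SignType.sign (c i) * y i, fun i => ?_, ?_⟩, ?_⟩
  · rw [abs_mul, abs_of_nonneg (hy i)]
    exact mul_le_of_le_one_left (hy i) (by cases SignType.sign (c i) <;> simp)
  · simp only [dotProduct, ← mul_assoc, self_mul_sign, Pi.abs_apply]
  · rintro _ ⟨w, hw, rfl⟩
    exact dotProduct_le_abs_dotProduct_of_abs_le hw

lemma isLeast_image_dotProduct_box (c : ι → ℝ) {y : ι → ℝ} (hy : 0 ≤ y) :
    IsLeast ((c ⬝ᵥ ·) '' {w | ∀ i, |w i| ≤ y i}) (-(|c| ⬝ᵥ y)) := by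
  obtain ⟨⟨w, hw, hcw⟩, hmax⟩ := isGreatest_image_dotProduct_box (-c) hy
  rw [abs_neg] at hcw hmax
  refine ⟨⟨w, hw, by simpa only [neg_dotProduct, neg_neg] using congrArg Neg.neg hcw⟩, ?_⟩
  rintro _ ⟨u, hu, rfl⟩
  have := hmax ⟨u, hu, rfl⟩
  simp only [neg_dotProduct] at this
  linarith

theorem isLeast_minimax_affine_box {y : ι → ℝ} {z : κ → ℝ} (hy : 0 ≤ y) (hz : 0 ≤ z)
    (f : (ι → ℝ) → (κ → ℝ) → ℝ) (a : ℝ) (d : ι → ℝ) (c : κ → ℝ)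
    (hf : ∀ u w, (∀ i, |u i| ≤ y i) → (∀ j, |w j| ≤ z j) → f u w = a + d ⬝ᵥ u + c ⬝ᵥ w) :
    IsLeast {v | ∃ u, (∀ i, |u i| ≤ y i) ∧
        IsGreatest {t | ∃ w, (∀ j, |w j| ≤ z j) ∧ t = f u w} v}
      (a - |d| ⬝ᵥ y + |c| ⬝ᵥ z) := by
  have inner : ∀ u, (∀ i, |u i| ≤ y i) →
      IsGreatest {t | ∃ w, (∀ j, |w j| ≤ z j) ∧ t = f u w} (a + d ⬝ᵥ u + |c| ⬝ᵥ z) := by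
    intro u hu
    obtain ⟨⟨w, hw, hcw : c ⬝ᵥ w = _⟩, hmax⟩ := isGreatest_image_dotProduct_box c hz
    refine ⟨⟨w, hw, by rw [hf u w hu hw, hcw]⟩, ?_⟩
    rintro _ ⟨w', hw', rfl⟩
    rw [hf u w' hu hw']
    linarith [hmax ⟨w', hw', rfl⟩]
  obtain ⟨⟨u, hu, hdu : d ⬝ᵥ u = _⟩, hmin⟩ := isLeast_image_dotProduct_box d hy
  refine ⟨⟨u, hu, ?_⟩, ?_⟩
  · convert inner u hu using 1
    rw [hdu]
    ring
  · rintro v ⟨u', hu', hv⟩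
    rw [← (inner u' hu').unique hv]
    linarith [hmin ⟨u', hu', rfl⟩]

end Box

lemma abs_mulVec_le_of_abs_le {m n : Type*} [Fintype n] {M : Matrix m n ℝ} {u y : n → ℝ}
    (hu : ∀ j, |u j| ≤ y j) (i : m) : |(M *ᵥ u) i| ≤ ((of fun i j => |M i j|) *ᵥ y) i :=
  (Finset.abs_sum_le_sum_abs _ _).trans <| Finset.sum_le_sum fun j _ => by
    rw [abs_mul]
    exact mul_le_mul_of_nonneg_left (hu j) (abs_nonneg _)

lemma mulVec_add_mulVec_add_mulVec_nonneg {n m l : Type*} [Fintype n] [Fintype m] [Fintype l]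
    {A : Matrix n n ℝ} {B : Matrix n m ℝ}
    {F : Matrix n l ℝ} {E : Matrix m n ℝ} {G : Matrix l n ℝ}
    (hA : ∀ i j, ((of fun i j => |B i j|) * E) i j + ((of fun i j => |F i j|) * G) i j ≤ A i j)
    {x : n → ℝ} (hx : 0 ≤ x) {u : m → ℝ} {w : l → ℝ}
    (hu : ∀ i, |u i| ≤ (E *ᵥ x) i) (hw : ∀ i, |w i| ≤ (G *ᵥ x) i) :
    0 ≤ A *ᵥ x + B *ᵥ u + F *ᵥ w := by
  intro i
  have hBu := abs_mulVec_le_of_abs_le (M := B) hu i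
  have hFw := abs_mulVec_le_of_abs_le (M := F) hw i
  rw [mulVec_mulVec] at hBu hFw
  have hdom : (((of fun i j => |B i j|) * E + (of fun i j => |F i j|) * G) *ᵥ x) i
      ≤ (A *ᵥ x) i :=
    dotProduct_le_dotProduct_of_nonneg_right (hA i) hx
  rw [add_mulVec] at hdom
  simp only [Pi.add_apply, Pi.zero_apply] at hdom ⊢
  linarith [neg_abs_le ((B *ᵥ u) i), neg_abs_le ((F *ᵥ w) i)]

theorem stmt4 {n m l : ℕ}
    (A : Matrix (Fin n) (Fin n) ℝ) (B : Matrix (Fin n) (Fin m) ℝ)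
    (F : Matrix (Fin n) (Fin l) ℝ)
    (E : Matrix (Fin m) (Fin n) ℝ) (G : Matrix (Fin l) (Fin n) ℝ)
    (s : Fin n → ℝ) (r : Fin m → ℝ) (γ : Fin l → ℝ)
    (hE : ∀ i j, 0 ≤ E i j) (hG : ∀ i j, 0 ≤ G i j)
    (hA : ∀ i j, ((Matrix.of fun i j => |B i j|) * E) i j
        + ((Matrix.of fun i j => |F i j|) * G) i j ≤ A i j)
    (p : Fin n → ℝ) (J : (Fin n → ℝ) → ℝ)
    (hJ : ∀ x, (∀ i, 0 ≤ x i) → J x = p ⬝ᵥ x)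
    (q : Fin n → ℝ)
    (hq : q = s + Aᵀ *ᵥ p - Eᵀ *ᵥ (fun i => |r i + (Bᵀ *ᵥ p) i|)
        + Gᵀ *ᵥ (fun i => |-γ i + (Fᵀ *ᵥ p) i|)) :
    ∀ x : Fin n → ℝ, (∀ i, 0 ≤ x i) →
      IsLeast {v : ℝ | ∃ u : Fin m → ℝ, (∀ i, |u i| ≤ (E *ᵥ x) i) ∧
          IsGreatest {z : ℝ | ∃ w : Fin l → ℝ, (∀ i, |w i| ≤ (G *ᵥ x) i) ∧
              z = s ⬝ᵥ x + r ⬝ᵥ u - γ ⬝ᵥ w + J (A *ᵥ x + B *ᵥ u + F *ᵥ w)} v}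
        (q ⬝ᵥ x) := by
  intro x hx
  have hEx : 0 ≤ E *ᵥ x := fun i => dotProduct_nonneg_of_nonneg (hE i) hx
  have hGx : 0 ≤ G *ᵥ x := fun i => dotProduct_nonneg_of_nonneg (hG i) hx
  convert isLeast_minimax_affine_box hEx hGx _ (s ⬝ᵥ x + p ⬝ᵥ (A *ᵥ x))
    (r + Bᵀ *ᵥ p) (-γ + Fᵀ *ᵥ p) (fun u w hu hw => ?_) using 1
  · simp only [hq, add_dotProduct, sub_dotProduct, dotProduct_mulVec, mulVec_transpose]
    rfl -- `|v|` on `Fin k → ℝ` unfolds to `fun i => |v i|`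
  · rw [hJ _ (mulVec_add_mulVec_add_mulVec_nonneg hA hx hu hw)]
    simp only [dotProduct_add, add_dotProduct, neg_dotProduct, dotProduct_mulVec,
      mulVec_transpose]
    ring
end

section
/- Under the assumptions A ≥ |B|E + |F|G and s ≥ Eᵀ|r| − Gᵀ|γ| (entrywise, with E, G entrywise nonnegative), the sequence p₀ = 0, p_k = s + Aᵀp_{k−1} − Eᵀ|r + Bᵀp_{k−1}| + Gᵀ|−γ + Fᵀp_{k−1}| is entrywise monotonically nondecreasing: 0 = p₀ ≤ p₁ ≤ p₂ ≤ ⋯ (componentwise). -/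
open Matrix

private lemma auxabs {N : ℕ} (c : ℝ) (b u v : Fin N → ℝ) (h : ∀ j, u j ≤ v j) :
    |(|c + ∑ j, b j * v j| - |c + ∑ j, b j * u j|)| ≤ ∑ j, |b j| * (v j - u j) := by
  have h1 : (c + ∑ j, b j * v j) - (c + ∑ j, b j * u j) = ∑ j, b j * (v j - u j) := by
    simp [mul_sub, Finset.sum_sub_distrib]
  calc |(|c + ∑ j, b j * v j| - |c + ∑ j, b j * u j|)|
      ≤ |(c + ∑ j, b j * v j) - (c + ∑ j, b j * u j)| := abs_abs_sub_abs_le_abs_sub _ _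
    _ = |∑ j, b j * (v j - u j)| := by rw [h1]
    _ ≤ ∑ j, |b j * (v j - u j)| := Finset.abs_sum_le_sum_abs _ _
    _ = ∑ j, |b j| * (v j - u j) := by
        refine Finset.sum_congr rfl fun j _ => ?_
        rw [abs_mul, abs_of_nonneg (sub_nonneg.2 (h j))]

theorem stmt9 {n m l : ℕ}
    (A : Matrix (Fin n) (Fin n) ℝ) (B : Matrix (Fin n) (Fin m) ℝ)
    (F : Matrix (Fin n) (Fin l) ℝ)
    (E : Matrix (Fin m) (Fin n) ℝ) (G : Matrix (Fin l) (Fin n) ℝ)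
    (s : Fin n → ℝ) (r : Fin m → ℝ) (γ : Fin l → ℝ)
    (hE : ∀ i j, 0 ≤ E i j) (hG : ∀ i j, 0 ≤ G i j)
    (hA : ∀ i j, ((Matrix.of fun i j => |B i j|) * E) i j
        + ((Matrix.of fun i j => |F i j|) * G) i j ≤ A i j)
    (hs : ∀ i, (Eᵀ *ᵥ (fun j => |r j|)) i - (Gᵀ *ᵥ (fun j => |γ j|)) i ≤ s i)
    (p : ℕ → Fin n → ℝ)
    (hp0 : p 0 = 0)
    (hpk : ∀ k, p (k+1) = s + Aᵀ *ᵥ (p k)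
        - Eᵀ *ᵥ (fun i => |r i + (Bᵀ *ᵥ (p k)) i|)
        + Gᵀ *ᵥ (fun i => |-γ i + (Fᵀ *ᵥ (p k)) i|)) :
    ∀ k i, p k i ≤ p (k+1) i := by
  have key : ∀ x y : Fin n → ℝ, (∀ j, x j ≤ y j) → ∀ i,
      (s + Aᵀ *ᵥ x - Eᵀ *ᵥ (fun j => |r j + (Bᵀ *ᵥ x) j|)
        + Gᵀ *ᵥ (fun j => |-γ j + (Fᵀ *ᵥ x) j|)) i
      ≤ (s + Aᵀ *ᵥ y - Eᵀ *ᵥ (fun j => |r j + (Bᵀ *ᵥ y) j|)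
        + Gᵀ *ᵥ (fun j => |-γ j + (Fᵀ *ᵥ y) j|)) i := by
    intro x y hxy i
    simp only [Pi.add_apply, Pi.sub_apply, Matrix.mulVec, dotProduct,
      Matrix.transpose_apply]
    have hBE : (∑ a, E a i * |r a + ∑ j, B j a * y j|)
        - (∑ a, E a i * |r a + ∑ j, B j a * x j|)
        ≤ ∑ a, ∑ j, E a i * (|B j a| * (y j - x j)) := by
      rw [← Finset.sum_sub_distrib]
      refine Finset.sum_le_sum fun a _ => ?_
      rw [← mul_sub, ← Finset.mul_sum]
      refine mul_le_mul_of_nonneg_left ?_ (hE a i)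
      exact le_trans (le_abs_self _) (auxabs (r a) (fun j => B j a) x y hxy)
    have hFG : (∑ a, G a i * |-γ a + ∑ j, F j a * x j|)
        - (∑ a, G a i * |-γ a + ∑ j, F j a * y j|)
        ≤ ∑ a, ∑ j, G a i * (|F j a| * (y j - x j)) := by
      rw [← Finset.sum_sub_distrib]
      refine Finset.sum_le_sum fun a _ => ?_
      rw [← mul_sub, ← Finset.mul_sum]
      refine mul_le_mul_of_nonneg_left ?_ (hG a i)
      refine le_trans (le_abs_self _) ?_
      rw [abs_sub_comm]
      exact auxabs (-γ a) (fun j => F j a) x y hxy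
    have hAsum : (∑ a, ∑ j, E a i * (|B j a| * (y j - x j)))
        + (∑ a, ∑ j, G a i * (|F j a| * (y j - x j)))
        ≤ (∑ j, A j i * y j) - (∑ j, A j i * x j) := by
      have e1 := Finset.sum_comm (s := (Finset.univ : Finset (Fin m)))
        (t := (Finset.univ : Finset (Fin n)))
        (f := fun a j => E a i * (|B j a| * (y j - x j)))
      have e2 := Finset.sum_comm (s := (Finset.univ : Finset (Fin l)))
        (t := (Finset.univ : Finset (Fin n)))
        (f := fun a j => G a i * (|F j a| * (y j - x j)))
      rw [e1, e2, ← Finset.sum_add_distrib, ← Finset.sum_sub_distrib]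
      refine Finset.sum_le_sum fun j _ => ?_
      have hd : 0 ≤ y j - x j := sub_nonneg.2 (hxy j)
      have h1 : (∑ a, E a i * (|B j a| * (y j - x j)))
          = (∑ a, |B j a| * E a i) * (y j - x j) := by
        rw [Finset.sum_mul]; exact Finset.sum_congr rfl fun a _ => by ring
      have h2 : (∑ a, G a i * (|F j a| * (y j - x j)))
          = (∑ a, |F j a| * G a i) * (y j - x j) := by
        rw [Finset.sum_mul]; exact Finset.sum_congr rfl fun a _ => by ring
      rw [h1, h2, ← add_mul, ← mul_sub]
      have := hA j i
      simp only [Matrix.mul_apply, Matrix.of_apply] at this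
      nlinarith [this, hd]
    linarith
  intro k
  induction k with
  | zero =>
    intro i
    have h1 := hs i
    rw [hp0, hpk 0, hp0]
    simp only [Matrix.mulVec_zero, Pi.add_apply, Pi.sub_apply, Pi.zero_apply, add_zero,
      abs_neg]
    linarith
  | succ k ih =>
    intro i
    rw [hpk k, hpk (k+1)]
    exact key (p k) (p (k+1)) ih i
end

section
/- Suppose p ∈ ℝ₊ⁿ satisfies p = s + Aᵀp − Eᵀ|r + Bᵀp| + Gᵀ|−γ + Fᵀp|. Then for every x ≥ 0 the function J(x) = pᵀx satisfies the Bellman equation J(x) = min_{|u|≤Ex} max_{|w|≤Gx} [sᵀx + rᵀu − γᵀw + J(Ax + Bu + Fw)], and the minimizing control is u = −Kx where the i-th row of K ∈ ℝ^{m×n} equals sign(r_i + pᵀB_i)·E_i, with E_i the i-th row of E and B_i the i-th column of B. -/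
open Matrix

noncomputable def sgn (t : ℝ) : ℝ := if 0 ≤ t then 1 else -1

lemma sgn_mul_self (t : ℝ) : sgn t * t = |t| := by
  unfold sgn
  rcases le_or_gt 0 t with h | h
  · rw [if_pos h, one_mul, abs_of_nonneg h]
  · rw [if_neg (not_le.2 h), abs_of_neg h]; ring

lemma abs_sgn (t : ℝ) : |sgn t| = 1 := by
  unfold sgn; split <;> simp

theorem stmt11 {n m l : ℕ}
    (A : Matrix (Fin n) (Fin n) ℝ) (B : Matrix (Fin n) (Fin m) ℝ)
    (F : Matrix (Fin n) (Fin l) ℝ)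
    (E : Matrix (Fin m) (Fin n) ℝ) (G : Matrix (Fin l) (Fin n) ℝ)
    (s : Fin n → ℝ) (r : Fin m → ℝ) (γ : Fin l → ℝ)
    (hE : ∀ i j, 0 ≤ E i j) (hG : ∀ i j, 0 ≤ G i j)
    (hA : ∀ i j, ((Matrix.of fun i j => |B i j|) * E) i j
        + ((Matrix.of fun i j => |F i j|) * G) i j ≤ A i j)
    (p : Fin n → ℝ) (hp : ∀ i, 0 ≤ p i)
    (hfix : p = s + Aᵀ *ᵥ p - Eᵀ *ᵥ (fun i => |r i + (Bᵀ *ᵥ p) i|)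
        + Gᵀ *ᵥ (fun i => |-γ i + (Fᵀ *ᵥ p) i|))
    (K : Matrix (Fin m) (Fin n) ℝ)
    (hK : ∀ i j, K i j = sgn (r i + p ⬝ᵥ (fun k => B k i)) * E i j) :
    ∀ x : Fin n → ℝ, (∀ i, 0 ≤ x i) →
      IsLeast {v : ℝ | ∃ u : Fin m → ℝ, (∀ i, |u i| ≤ (E *ᵥ x) i) ∧
          IsGreatest {z : ℝ | ∃ w : Fin l → ℝ, (∀ i, |w i| ≤ (G *ᵥ x) i) ∧
              z = s ⬝ᵥ x + r ⬝ᵥ u - γ ⬝ᵥ w + p ⬝ᵥ (A *ᵥ x + B *ᵥ u + F *ᵥ w)} v}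
        (p ⬝ᵥ x) ∧
      (∀ i, |(-(K *ᵥ x)) i| ≤ (E *ᵥ x) i) ∧
      IsGreatest {z : ℝ | ∃ w : Fin l → ℝ, (∀ i, |w i| ≤ (G *ᵥ x) i) ∧
          z = s ⬝ᵥ x + r ⬝ᵥ (-(K *ᵥ x)) - γ ⬝ᵥ w
            + p ⬝ᵥ (A *ᵥ x + B *ᵥ (-(K *ᵥ x)) + F *ᵥ w)}
        (p ⬝ᵥ x) := by
  intro x hx
  have hEx : ∀ i, 0 ≤ (E *ᵥ x) i := by
    intro i
    simp only [Matrix.mulVec, dotProduct]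
    exact Finset.sum_nonneg fun j _ => mul_nonneg (hE i j) (hx j)
  have hGx : ∀ i, 0 ≤ (G *ᵥ x) i := by
    intro i
    simp only [Matrix.mulVec, dotProduct]
    exact Finset.sum_nonneg fun j _ => mul_nonneg (hG i j) (hx j)
  set c : Fin m → ℝ := r + Bᵀ *ᵥ p with hcdef
  set d : Fin l → ℝ := (-γ) + Fᵀ *ᵥ p with hddef
  have hci : ∀ i, c i = r i + (Bᵀ *ᵥ p) i := fun i => rfl
  have hdi : ∀ i, d i = -γ i + (Fᵀ *ᵥ p) i := fun i => rfl
  -- decomposition of the objective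
  have hz : ∀ (u : Fin m → ℝ) (w : Fin l → ℝ),
      s ⬝ᵥ x + r ⬝ᵥ u - γ ⬝ᵥ w + p ⬝ᵥ (A *ᵥ x + B *ᵥ u + F *ᵥ w)
        = s ⬝ᵥ x + p ⬝ᵥ (A *ᵥ x) + c ⬝ᵥ u + d ⬝ᵥ w := by
    intro u w
    have h1 : p ⬝ᵥ (B *ᵥ u) = (Bᵀ *ᵥ p) ⬝ᵥ u := by
      rw [Matrix.mulVec_transpose, Matrix.dotProduct_mulVec]
    have h2 : p ⬝ᵥ (F *ᵥ w) = (Fᵀ *ᵥ p) ⬝ᵥ w := by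
      rw [Matrix.mulVec_transpose, Matrix.dotProduct_mulVec]
    simp only [dotProduct_add, hcdef, hddef, add_dotProduct,
      neg_dotProduct, h1, h2]
    ring
  -- fixed point equation dotted with x
  have key : p ⬝ᵥ x = s ⬝ᵥ x + p ⬝ᵥ (A *ᵥ x)
      - (fun i => |c i|) ⬝ᵥ (E *ᵥ x) + (fun i => |d i|) ⬝ᵥ (G *ᵥ x) := by
    have h0 := congrArg (· ⬝ᵥ x) hfix
    simp only [add_dotProduct, sub_dotProduct] at h0
    have hA' : (Aᵀ *ᵥ p) ⬝ᵥ x = p ⬝ᵥ (A *ᵥ x) := by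
      rw [Matrix.mulVec_transpose, Matrix.dotProduct_mulVec]
    have hE' : (Eᵀ *ᵥ fun i => |c i|) ⬝ᵥ x = (fun i => |c i|) ⬝ᵥ (E *ᵥ x) := by
      rw [Matrix.mulVec_transpose, Matrix.dotProduct_mulVec]
    have hG' : (Gᵀ *ᵥ fun i => |d i|) ⬝ᵥ x = (fun i => |d i|) ⬝ᵥ (G *ᵥ x) := by
      rw [Matrix.mulVec_transpose, Matrix.dotProduct_mulVec]
    rw [h0, hA']
    rw [show (fun i => |r i + (Bᵀ *ᵥ p) i|) = fun i => |c i| from rfl,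
      show (fun i => |-γ i + (Fᵀ *ᵥ p) i|) = fun i => |d i| from rfl, hE', hG']
  -- the control −Kx
  have hcK : ∀ i, r i + p ⬝ᵥ (fun k => B k i) = c i := by
    intro i
    simp [hci, Matrix.mulVec, dotProduct, Matrix.transpose_apply, mul_comm]
  have hKx : ∀ i, (K *ᵥ x) i = sgn (c i) * (E *ᵥ x) i := by
    intro i
    simp only [Matrix.mulVec, dotProduct] at *
    simp only [hK, hcK, mul_assoc, ← Finset.mul_sum]
  have hu0 : ∀ i, |(-(K *ᵥ x)) i| ≤ (E *ᵥ x) i := by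
    intro i
    rw [Pi.neg_apply, abs_neg, hKx i, abs_mul, abs_sgn, one_mul,
      abs_of_nonneg (hEx i)]
  have hcu0 : c ⬝ᵥ (-(K *ᵥ x)) = -((fun i => |c i|) ⬝ᵥ (E *ᵥ x)) := by
    rw [dotProduct_neg, neg_inj]
    refine Finset.sum_congr rfl fun i _ => ?_
    show c i * (K *ᵥ x) i = |c i| * (E *ᵥ x) i
    rw [hKx i, ← sgn_mul_self (c i)]; ring
  -- bounds on the bilinear parts
  have hmaxw : ∀ w : Fin l → ℝ, (∀ i, |w i| ≤ (G *ᵥ x) i) →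
      d ⬝ᵥ w ≤ (fun i => |d i|) ⬝ᵥ (G *ᵥ x) := by
    intro w hw
    refine Finset.sum_le_sum fun i _ => ?_
    calc d i * w i ≤ |d i * w i| := le_abs_self _
      _ = |d i| * |w i| := abs_mul _ _
      _ ≤ |d i| * (G *ᵥ x) i := mul_le_mul_of_nonneg_left (hw i) (abs_nonneg _)
  have hminu : ∀ u : Fin m → ℝ, (∀ i, |u i| ≤ (E *ᵥ x) i) →
      -((fun i => |c i|) ⬝ᵥ (E *ᵥ x)) ≤ c ⬝ᵥ u := by
    intro u hu
    simp only [dotProduct]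
    rw [← Finset.sum_neg_distrib]
    refine Finset.sum_le_sum fun i _ => ?_
    show -(|c i| * (E *ᵥ x) i) ≤ c i * u i
    have h1 : |c i * u i| ≤ |c i| * (E *ᵥ x) i := by
      rw [abs_mul]; exact mul_le_mul_of_nonneg_left (hu i) (abs_nonneg _)
    have h2 := neg_abs_le (c i * u i)
    linarith
  -- the optimal adversarial w
  set w0 : Fin l → ℝ := fun i => sgn (d i) * (G *ᵥ x) i with hw0def
  have hw0 : ∀ i, |w0 i| ≤ (G *ᵥ x) i := by
    intro i
    rw [hw0def]
    simp only
    rw [abs_mul, abs_sgn, one_mul, abs_of_nonneg (hGx i)]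
  have hdw0 : d ⬝ᵥ w0 = (fun i => |d i|) ⬝ᵥ (G *ᵥ x) := by
    refine Finset.sum_congr rfl fun i _ => ?_
    show d i * w0 i = |d i| * (G *ᵥ x) i
    rw [hw0def]
    rw [← sgn_mul_self (d i)]; ring
  -- IsGreatest for the control −Kx
  have hGr : IsGreatest {z : ℝ | ∃ w : Fin l → ℝ, (∀ i, |w i| ≤ (G *ᵥ x) i) ∧
      z = s ⬝ᵥ x + r ⬝ᵥ (-(K *ᵥ x)) - γ ⬝ᵥ w
        + p ⬝ᵥ (A *ᵥ x + B *ᵥ (-(K *ᵥ x)) + F *ᵥ w)} (p ⬝ᵥ x) := by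
    constructor
    · exact ⟨w0, hw0, by rw [hz, hcu0, hdw0, key]; ring⟩
    · rintro z ⟨w, hw, rfl⟩
      rw [hz, hcu0, key]
      have := hmaxw w hw
      linarith
  refine ⟨⟨⟨-(K *ᵥ x), hu0, hGr⟩, ?_⟩, hu0, hGr⟩
  rintro v ⟨u, hu, hvG⟩
  have hmem : s ⬝ᵥ x + r ⬝ᵥ u - γ ⬝ᵥ w0 + p ⬝ᵥ (A *ᵥ x + B *ᵥ u + F *ᵥ w0)
      ∈ {z : ℝ | ∃ w : Fin l → ℝ, (∀ i, |w i| ≤ (G *ᵥ x) i) ∧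
        z = s ⬝ᵥ x + r ⬝ᵥ u - γ ⬝ᵥ w + p ⬝ᵥ (A *ᵥ x + B *ᵥ u + F *ᵥ w)} :=
    ⟨w0, hw0, rfl⟩
  have hle := hvG.2 hmem
  rw [hz, hdw0] at hle
  have := hminu u hu
  rw [key]
  linarith
end

section
/- Let x ≥ 0 in ℝⁿ, E ∈ ℝ₊^{m×n} nonnegative, and c ∈ ℝᵐ. Define u* ∈ ℝᵐ by u*_i = −sign(c_i)(Ex)_i. Then u* satisfies the constraint |u*| ≤ Ex and cᵀu* = −|c|ᵀEx ≤ cᵀu for every u with |u| ≤ Ex. Consequently, the feedback u = −Kx with K_i = sign(c_i)E_i achieves the minimum of cᵀu over the constraint set for every x ≥ 0 simultaneously. -/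
open Matrix

theorem stmt13 {n m : ℕ}
    (E : Matrix (Fin m) (Fin n) ℝ) (hE : ∀ i j, 0 ≤ E i j)
    (c : Fin m → ℝ)
    (K : Matrix (Fin m) (Fin n) ℝ)
    (hK : ∀ i j, K i j = sgn (c i) * E i j) :
    ∀ x : Fin n → ℝ, (∀ i, 0 ≤ x i) →
      (∀ i, |(fun i => -(sgn (c i)) * (E *ᵥ x) i) i| ≤ (E *ᵥ x) i) ∧
      c ⬝ᵥ (fun i => -(sgn (c i)) * (E *ᵥ x) i) = -((fun i => |c i|) ⬝ᵥ (E *ᵥ x)) ∧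
      (∀ u : Fin m → ℝ, (∀ i, |u i| ≤ (E *ᵥ x) i) →
        c ⬝ᵥ (fun i => -(sgn (c i)) * (E *ᵥ x) i) ≤ c ⬝ᵥ u) ∧
      (fun i => -(sgn (c i)) * (E *ᵥ x) i) = -(K *ᵥ x) := by
  intro x hx
  have hEx : ∀ i, 0 ≤ (E *ᵥ x) i := fun i => by
    simp only [mulVec, dotProduct]
    exact Finset.sum_nonneg fun j _ => mul_nonneg (hE i j) (hx j)
  have key : ∀ i, c i * (-(sgn (c i)) * (E *ᵥ x) i) = -(|c i| * (E *ᵥ x) i) := by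
    intro i
    have := sgn_mul_self (c i)
    rw [← this]; ring
  refine ⟨?_, ?_, ?_, ?_⟩
  · intro i
    simp only [abs_mul, abs_neg, abs_sgn, one_mul, abs_of_nonneg (hEx i), le_refl]
  · simp only [dotProduct, key]
    rw [← Finset.sum_neg_distrib]
  · intro u hu
    simp only [dotProduct]
    apply Finset.sum_le_sum
    intro i _
    rw [key i]
    calc -(|c i| * (E *ᵥ x) i) ≤ -|c i * u i| := by
          rw [abs_mul, neg_le_neg_iff]
          exact mul_le_mul_of_nonneg_left (hu i) (abs_nonneg _)
      _ ≤ c i * u i := neg_abs_le _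
  · funext i
    simp only [Pi.neg_apply, mulVec, dotProduct, hK]
    rw [← Finset.sum_neg_distrib, Finset.mul_sum]
    apply Finset.sum_congr rfl
    intro j _; ring
end

section
/- Consider the map T : ℝⁿ → ℝⁿ, T(p) = s + Aᵀp − Eᵀ|r + Bᵀp| + Gᵀ|−γ + Fᵀp|. If A ≥ |B|E + |F|G entrywise with E, G entrywise nonnegative, then T is monotone on ℝⁿ: p ≤ q (componentwise) implies T(p) ≤ T(q). -/
open Matrix

theorem stmt14 {n m l : ℕ}
    (A : Matrix (Fin n) (Fin n) ℝ) (B : Matrix (Fin n) (Fin m) ℝ)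
    (F : Matrix (Fin n) (Fin l) ℝ)
    (E : Matrix (Fin m) (Fin n) ℝ) (G : Matrix (Fin l) (Fin n) ℝ)
    (s : Fin n → ℝ) (r : Fin m → ℝ) (γ : Fin l → ℝ)
    (hE : ∀ i j, 0 ≤ E i j) (hG : ∀ i j, 0 ≤ G i j)
    (hA : ∀ i j, ((Matrix.of fun i j => |B i j|) * E) i j
        + ((Matrix.of fun i j => |F i j|) * G) i j ≤ A i j)
    (T : (Fin n → ℝ) → (Fin n → ℝ))
    (hT : ∀ p, T p = s + Aᵀ *ᵥ p - Eᵀ *ᵥ (fun i => |r i + (Bᵀ *ᵥ p) i|)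
        + Gᵀ *ᵥ (fun i => |-γ i + (Fᵀ *ᵥ p) i|)) :
    ∀ p q : Fin n → ℝ, (∀ i, p i ≤ q i) → ∀ i, T p i ≤ T q i := by
  intro p q hpq i
  rw [hT p, hT q]
  simp only [Pi.add_apply, Pi.sub_apply, Matrix.mulVec, dotProduct, transpose_apply]
  have hd : ∀ j, 0 ≤ q j - p j := fun j => sub_nonneg.2 (hpq j)
  -- bound on B-absolute terms
  have hB : ∀ k : Fin m, |r k + ∑ j, B j k * q j| - |r k + ∑ j, B j k * p j|
      ≤ ∑ j, |B j k| * (q j - p j) := by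
    intro k
    calc |r k + ∑ j, B j k * q j| - |r k + ∑ j, B j k * p j|
        ≤ |(r k + ∑ j, B j k * q j) - (r k + ∑ j, B j k * p j)| :=
          abs_sub_abs_le_abs_sub _ _
      _ = |∑ j, B j k * (q j - p j)| := by
          congr 1
          simp only [mul_sub, Finset.sum_sub_distrib]
          ring
      _ ≤ ∑ j, |B j k * (q j - p j)| := Finset.abs_sum_le_sum_abs _ _
      _ = ∑ j, |B j k| * (q j - p j) := by
          refine Finset.sum_congr rfl fun j _ => ?_
          rw [abs_mul, abs_of_nonneg (hd j)]
  have hF : ∀ t : Fin l, |-γ t + ∑ j, F j t * p j| - |-γ t + ∑ j, F j t * q j|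
      ≤ ∑ j, |F j t| * (q j - p j) := by
    intro t
    calc |-γ t + ∑ j, F j t * p j| - |-γ t + ∑ j, F j t * q j|
        ≤ |(-γ t + ∑ j, F j t * p j) - (-γ t + ∑ j, F j t * q j)| :=
          abs_sub_abs_le_abs_sub _ _
      _ = |∑ j, F j t * (q j - p j)| := by
          rw [← abs_neg]
          congr 1
          simp only [mul_sub, Finset.sum_sub_distrib]
          ring
      _ ≤ ∑ j, |F j t * (q j - p j)| := Finset.abs_sum_le_sum_abs _ _
      _ = ∑ j, |F j t| * (q j - p j) := by
          refine Finset.sum_congr rfl fun j _ => ?_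
          rw [abs_mul, abs_of_nonneg (hd j)]
  have hEsum : ∑ k, E k i * |r k + ∑ j, B j k * q j| - ∑ k, E k i * |r k + ∑ j, B j k * p j|
      ≤ ∑ k, E k i * ∑ j, |B j k| * (q j - p j) := by
    rw [← Finset.sum_sub_distrib]
    refine Finset.sum_le_sum fun k _ => ?_
    rw [← mul_sub]
    exact mul_le_mul_of_nonneg_left (hB k) (hE k i)
  have hGsum : ∑ t, G t i * |-γ t + ∑ j, F j t * p j| - ∑ t, G t i * |-γ t + ∑ j, F j t * q j|
      ≤ ∑ t, G t i * ∑ j, |F j t| * (q j - p j) := by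
    rw [← Finset.sum_sub_distrib]
    refine Finset.sum_le_sum fun t _ => ?_
    rw [← mul_sub]
    exact mul_le_mul_of_nonneg_left (hF t) (hG t i)
  have hMain : (∑ k, E k i * ∑ j, |B j k| * (q j - p j))
      + (∑ t, G t i * ∑ j, |F j t| * (q j - p j))
      ≤ ∑ j, A j i * (q j - p j) := by
    have h1 : (∑ k, E k i * ∑ j, |B j k| * (q j - p j))
        = ∑ j, (∑ k, |B j k| * E k i) * (q j - p j) := by
      simp only [Finset.mul_sum, Finset.sum_mul]
      rw [Finset.sum_comm]
      exact Finset.sum_congr rfl fun j _ => Finset.sum_congr rfl fun k _ => by ring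
    have h2 : (∑ t, G t i * ∑ j, |F j t| * (q j - p j))
        = ∑ j, (∑ t, |F j t| * G t i) * (q j - p j) := by
      simp only [Finset.mul_sum, Finset.sum_mul]
      rw [Finset.sum_comm]
      exact Finset.sum_congr rfl fun j _ => Finset.sum_congr rfl fun t _ => by ring
    rw [h1, h2, ← Finset.sum_add_distrib]
    refine Finset.sum_le_sum fun j _ => ?_
    rw [← add_mul]
    refine mul_le_mul_of_nonneg_right ?_ (hd j)
    have := hA j i
    simpa [Matrix.mul_apply] using this
  have hAdiff : ∑ j, A j i * q j - ∑ j, A j i * p j = ∑ j, A j i * (q j - p j) := by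
    simp only [mul_sub, Finset.sum_sub_distrib]
  linarith
end
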